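/- Free groups of finite rank are Hopfian: every surjective endomorphism of a finitely generated free group is an isomorphism. -/

import Mathlib

open Function

/-- Any partial injection on a finite type extends to a permutation. -/
lemma exists_perm_extend {α : Type*} [Fintype α] [DecidableEq α] (s : Finset α) (f : α → α)
    (hinj : Set.InjOn f s) : ∃ σ : Equiv.Perm α, ∀ x ∈ s, σ x = f x := by
  classical
  set t := s.image f with ht
  have hcard : sᶜ.card = tᶜ.card := by
    rw [Finset.card_compl, Finset.card_compl, ht, Finset.card_image_of_injOn hinj]
  let e : (sᶜ : Finset α) ≃ (tᶜ : Finset α) := Finset.equivOfCardEq hcard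
  let g : α → α := fun x => if h : x ∈ s then f x else (e ⟨x, by simpa using h⟩ : α)
  have hmem : ∀ x (h : x ∉ s), ((e ⟨x, by simpa using h⟩ : α)) ∉ t := fun x h => by
    have := (e ⟨x, by simpa using h⟩).2
    exact Finset.mem_compl.mp this
  have hg : Function.Injective g := by
    intro x y hxy
    by_cases hx : x ∈ s <;> by_cases hy : y ∈ s <;> simp only [g, hx, hy, dif_pos, dif_neg,
      not_false_iff] at hxy
    · exact hinj hx hy hxy
    · exact absurd (hxy ▸ Finset.mem_image_of_mem f hx) (hmem y hy)
    · exact absurd (hxy ▸ Finset.mem_image_of_mem f hy) (hmem x hx)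
    · have h2 := e.injective (Subtype.ext hxy)
      exact Subtype.mk_eq_mk.mp h2
  refine ⟨Equiv.ofBijective g (Finite.injective_iff_bijective.mp hg), fun x hx => ?_⟩
  simp [Equiv.ofBijective, g, hx]

section Word

variable {α : Type*} [DecidableEq α] (L : List (α × Bool))

/-- First condition: position `x` carries letter `(a, false)`. -/
def hcond1 (a : α) (j : ℕ) : Prop := L[j]? = some (a, false)

/-- Second condition: position `x - 1` carries letter `(a, true)`. -/
def hcond2 (a : α) (j : ℕ) : Prop := 0 < j ∧ L[j-1]? = some (a, true)

instance (a : α) (j : ℕ) : Decidable (hcond1 L a j) := by unfold hcond1; infer_instance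
instance (a : α) (j : ℕ) : Decidable (hcond2 L a j) := by unfold hcond2; infer_instance

lemma lt_of_cond1 {a : α} {j : ℕ} (h : hcond1 L a j) : j < L.length := by
  have := List.getElem?_eq_some_iff.mp h
  exact this.1

/-- The partial map: `j ↦ j+1` on `(a,false)` letters, `j+1 ↦ j` on `(a,true)` letters. -/
def pfn (a : α) (x : Fin (L.length + 1)) : Fin (L.length + 1) :=
  if h : hcond1 L a x.val then ⟨x.val + 1, by have := lt_of_cond1 L h; omega⟩
  else if h2 : hcond2 L a x.val then ⟨x.val - 1, by omega⟩ else x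

/-- The domain of the partial map. -/
def pdom (a : α) : Finset (Fin (L.length + 1)) :=
  Finset.univ.filter (fun x => hcond1 L a x.val ∨ hcond2 L a x.val)

variable (hred : ∀ (j : ℕ) (a : α) (e : Bool),
    L[j]? = some (a, e) → L[j+1]? = some (a, !e) → False)

include hred in
lemma pfn_injOn (a : α) : Set.InjOn (pfn L a) (pdom L a) := by
  intro x hx y hy hxy
  simp only [pdom, Finset.coe_filter, Set.mem_setOf_eq, Finset.mem_univ, true_and] at hx hy
  unfold pfn at hxy
  have hx1 := lt_of_cond1 L (a := a) (j := x.val)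
  have hy1 := lt_of_cond1 L (a := a) (j := y.val)
  by_cases h1 : hcond1 L a x.val <;> by_cases h2 : hcond1 L a y.val <;>
    simp only [h1, h2, dif_pos, dif_neg, not_false_iff] at hxy
  · have h : x.val + 1 = y.val + 1 := congrArg Fin.val hxy
    exact Fin.ext (by omega)
  · have h2' : hcond2 L a y.val := hy.resolve_left h2
    rw [dif_pos h2'] at hxy
    have h : x.val + 1 = y.val - 1 := congrArg Fin.val hxy
    exfalso
    refine hred x.val a false h1 ?_
    have := h2'.2
    rw [show y.val - 1 = x.val + 1 from by omega] at this
    simpa using this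
  · have h1' : hcond2 L a x.val := hx.resolve_left h1
    rw [dif_pos h1'] at hxy
    have h : x.val - 1 = y.val + 1 := congrArg Fin.val hxy
    exfalso
    refine hred y.val a false h2 ?_
    have := h1'.2
    rw [show x.val - 1 = y.val + 1 from by omega] at this
    simpa using this
  · have h1' : hcond2 L a x.val := hx.resolve_left h1
    have h2' : hcond2 L a y.val := hy.resolve_left h2
    rw [dif_pos h1', dif_pos h2'] at hxy
    have h : x.val - 1 = y.val - 1 := congrArg Fin.val hxy
    have := h1'.1
    have := h2'.1
    exact Fin.ext (by omega)

include hred in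
lemma exists_sigma : ∃ σ : α → Equiv.Perm (Fin (L.length + 1)),
    ∀ a x, (hcond1 L a x.val ∨ hcond2 L a x.val) → σ a x = pfn L a x := by
  have h := fun a => exists_perm_extend (pdom L a) (pfn L a) (pfn_injOn L hred a)
  choose σ hσ using h
  exact ⟨σ, fun a x hx => hσ a x (by simp [pdom, hx])⟩

variable {σ : α → Equiv.Perm (Fin (L.length + 1))}
  (hσ : ∀ a x, (hcond1 L a x.val ∨ hcond2 L a x.val) → σ a x = pfn L a x)

include hred hσ in
lemma sigma_true {a : α} {j : ℕ} (h : L[j]? = some (a, true)) (hj : j + 1 < L.length + 1) :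
    σ a ⟨j + 1, hj⟩ = ⟨j, by omega⟩ := by
  have hc2 : hcond2 L a (j + 1) := ⟨Nat.succ_pos j, by simpa using h⟩
  have hc1 : ¬ hcond1 L a (j + 1) := by
    intro hc1
    exact hred j a true h (by unfold hcond1 at hc1; simpa using hc1)
  rw [hσ a ⟨j + 1, hj⟩ (Or.inr hc2)]
  unfold pfn
  rw [dif_neg hc1, dif_pos hc2]
  exact Fin.ext (Nat.succ_sub_one j)

include hσ in
lemma sigma_false {a : α} {j : ℕ} (h : L[j]? = some (a, false)) (hj : j < L.length + 1) :
    σ a ⟨j, hj⟩ = ⟨j + 1, by have := (List.getElem?_eq_some_iff.mp h).1; omega⟩ := by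
  have hc1 : hcond1 L a j := h
  rw [hσ a ⟨j, hj⟩ (Or.inl hc1)]
  unfold pfn
  rw [dif_pos hc1]

/-- Interpret a letter as a permutation. -/
def gfun (σ : α → Equiv.Perm (Fin (L.length + 1))) (p : α × Bool) : Equiv.Perm (Fin (L.length + 1)) :=
  cond p.2 (σ p.1) (σ p.1)⁻¹

include hred hσ in
lemma gfun_step {a : α} {e : Bool} {j : ℕ} (h : L[j]? = some (a, e)) (hj : j + 1 < L.length + 1) :
    gfun L σ (a, e) ⟨j + 1, hj⟩ = ⟨j, by omega⟩ := by
  cases e with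
  | true => exact sigma_true L hred hσ h hj
  | false =>
    show (σ a)⁻¹ _ = _
    have := sigma_false L hσ h (by omega)
    rw [← this, Equiv.Perm.inv_def, Equiv.symm_apply_apply]

include hred hσ in
lemma suffix_prod : ∀ (M pre : List (α × Bool)), L = pre ++ M →
    (((M.map (gfun L σ)).prod) ⟨L.length, Nat.lt_succ_self _⟩).val = pre.length := by
  intro M
  induction M with
  | nil =>
    intro pre hpre
    simp [hpre]
  | cons p M' ih =>
    intro pre hpre
    obtain ⟨a, e⟩ := p
    have hlen : L.length = pre.length + 1 + M'.length := by simp [hpre]; omega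
    have hih := ih (pre ++ [(a, e)]) (by simp [hpre])
    have hj : pre.length + 1 < L.length + 1 := by omega
    have hinner : ((M'.map (gfun L σ)).prod) ⟨L.length, Nat.lt_succ_self _⟩
        = ⟨pre.length + 1, hj⟩ := Fin.ext (by simpa using hih)
    have hL : L[pre.length]? = some (a, e) := by
      rw [hpre, List.getElem?_append_right le_rfl]
      simp
    simp only [List.map_cons, List.prod_cons, Equiv.Perm.mul_apply, hinner]
    rw [gfun_step L hred hσ hL hj]

end Word

/-- Free groups of finite rank are Hopfian: every surjective endomorphism of a finitely
generated free group is injective (hence an isomorphism). -/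
theorem stmt_8 (n : ℕ) (f : FreeGroup (Fin n) →* FreeGroup (Fin n))
    (hf : Function.Surjective f) : Function.Injective f := by
  classical
  rw [injective_iff_map_eq_one]
  intro z hz
  by_contra hz1
  set L := z.toWord with hLdef
  have hL0 : L ≠ [] := fun h => hz1 (FreeGroup.toWord_eq_nil_iff.mp h)
  -- the reduced word of `z` has no cancelling adjacent pair
  have hred : ∀ (j : ℕ) (a : Fin n) (e : Bool),
      L[j]? = some (a, e) → L[j+1]? = some (a, !e) → False := by
    intro j a e h1 h2
    have hj1 : j + 1 < L.length := (List.getElem?_eq_some_iff.mp h2).1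
    have hdecomp : L = L.take j ++ (a, e) :: (a, !e) :: L.drop (j + 2) := by
      have e1 : L.drop j = (a, e) :: L.drop (j + 1) := by
        rw [List.drop_eq_getElem_cons (by omega)]
        obtain ⟨h, hval⟩ := List.getElem?_eq_some_iff.mp h1
        rw [hval]
      have e2 : L.drop (j + 1) = (a, !e) :: L.drop (j + 2) := by
        rw [List.drop_eq_getElem_cons (by omega)]
        obtain ⟨h, hval⟩ := List.getElem?_eq_some_iff.mp h2
        rw [hval]
      rw [← e2, ← e1, List.take_append_drop]
    exact FreeGroup.reduce.not (L₁ := L) (x := a) (b := e)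
      (by rw [FreeGroup.reduce_toWord]; exact hdecomp)
  -- the separating homomorphism to a finite permutation group
  obtain ⟨σ, hσ⟩ := exists_sigma L hred
  let φ : FreeGroup (Fin n) →* Equiv.Perm (Fin (L.length + 1)) := FreeGroup.lift σ
  have hφz : φ z = ((L.map (gfun L σ)).prod) := by
    conv_lhs => rw [← FreeGroup.mk_toWord (x := z)]
    rw [FreeGroup.lift_mk]
    rfl
  have hφval : ((φ z) ⟨L.length, Nat.lt_succ_self _⟩).val = 0 := by
    rw [hφz]
    simpa using suffix_prod L hred hσ L [] rfl
  have hφne : φ z ≠ 1 := by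
    intro h
    rw [h] at hφval
    rw [Equiv.Perm.one_apply] at hφval
    exact hL0 (List.length_eq_zero_iff.mp hφval)
  -- Mal'cev's argument: precomposition with `f` is injective, hence surjective
  have hfin : Finite (FreeGroup (Fin n) →* Equiv.Perm (Fin (L.length + 1))) :=
    Finite.of_equiv _ FreeGroup.lift
  have hinj : Function.Injective
      (fun ψ : FreeGroup (Fin n) →* Equiv.Perm (Fin (L.length + 1)) => ψ.comp f) := by
    intro ψ₁ ψ₂ h
    refine MonoidHom.ext fun w => ?_
    obtain ⟨v, rfl⟩ := hf w
    exact DFunLike.congr_fun h v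
  obtain ⟨ψ, hψ⟩ := (Finite.injective_iff_surjective.mp hinj) φ
  have : φ z = 1 := by
    calc φ z = ψ (f z) := by rw [← hψ]; rfl
    _ = ψ 1 := by rw [hz]
    _ = 1 := map_one ψ
  exact hφne this
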